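/- For every permutation w of {1,…,n}, the word φ(w) is a Motzkin path of length n; that is, every prefix of φ(w) contains at least as many U's as D's, and φ(w) contains equally many U's and D's. -/

import Mathlib

/-- The three kinds of steps of a Motzkin path. -/
inductive Step : Type
  | U : Step
  | D : Step
  | H : Step
deriving DecidableEq
instance : Fintype Step := ⟨{Step.U, Step.D, Step.H}, fun x => by cases x <;> simp⟩
/-- Number of indices `i` with `i < m` (i.e. in the prefix of length `m`,
with 0-based indexing) at which the word `p` has the letter `s`. -/
def countIn {n : ℕ} (p : Fin n → Step) (s : Step) (m : ℕ) : ℕ :=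
  (Finset.univ.filter (fun i : Fin n => (i : ℕ) < m ∧ p i = s)).card
/-- A word `p` of length `n` over `{U, D, H}` is a Motzkin path if every
prefix contains at least as many `U`'s as `D`'s and the whole word contains
equally many `U`'s and `D`'s. -/
def IsMotzkin {n : ℕ} (p : Fin n → Step) : Prop :=
  (∀ m ≤ n, countIn p Step.D m ≤ countIn p Step.U m) ∧
  countIn p Step.U n = countIn p Step.D n
/-- The map `φ` from permutations of `{1,…,n}` to words over `{U,D,H}`:
`p_i = U` if `w⁻¹(i) > i < w(i)`, `p_i = D` if `w⁻¹(i) < i > w(i)`,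
and `p_i = H` otherwise. -/
def phi {n : ℕ} (w : Equiv.Perm (Fin n)) : Fin n → Step := fun i =>
  if i < w.symm i ∧ i < w i then Step.U
  else if w.symm i < i ∧ w i < i then Step.D
  else Step.H

/-!
Draw an arc `i → w i` for every excedance `i < w i`. Then `φ(w)` has a `U` exactly at the
positions where an arc starts and none ends, and a `D` where an arc ends and none starts.
Writing `S` and `E` for the arc starts and arc ends in a prefix, the prefix therefore has
`|S \ E|` letters `U` and `|E \ S|` letters `D`, whose difference is `|S| - |E|`. Every arc
ending in the prefix also starts there, so `|E| ≤ |S|`, with equality for the whole word.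
-/

open Finset

section Arcs

variable {n : ℕ} (w : Equiv.Perm (Fin n))

def arcStartsBelow (m : ℕ) : Finset (Fin n) := {i | (i : ℕ) < m ∧ i < w i}

def arcEndsBelow (m : ℕ) : Finset (Fin n) := {j | (j : ℕ) < m ∧ w.symm j < j}

theorem phi_eq_U_iff (i : Fin n) : phi w i = Step.U ↔ i < w i ∧ ¬ w.symm i < i := by
  have := w.symm_apply_eq (x := i) (y := i)
  unfold phi
  split_ifs <;> grind

theorem phi_eq_D_iff (i : Fin n) : phi w i = Step.D ↔ w.symm i < i ∧ ¬ i < w i := by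
  have := w.symm_apply_eq (x := i) (y := i)
  unfold phi
  split_ifs <;> grind

theorem countIn_phi_U (m : ℕ) :
    countIn (phi w) Step.U m = #(arcStartsBelow w m \ arcEndsBelow w m) := by
  unfold countIn
  congr 1
  ext i
  simp only [phi_eq_U_iff, arcStartsBelow, arcEndsBelow, mem_filter, mem_univ, true_and, mem_sdiff]
  tauto

theorem countIn_phi_D (m : ℕ) :
    countIn (phi w) Step.D m = #(arcEndsBelow w m \ arcStartsBelow w m) := by
  unfold countIn
  congr 1
  ext i
  simp only [phi_eq_D_iff, arcStartsBelow, arcEndsBelow, mem_filter, mem_univ, true_and, mem_sdiff]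
  tauto

theorem countIn_phi_U_add_card_arcEndsBelow (m : ℕ) :
    countIn (phi w) Step.U m + #(arcEndsBelow w m) =
      countIn (phi w) Step.D m + #(arcStartsBelow w m) := by
  rw [countIn_phi_U, countIn_phi_D, card_sdiff_add_card, card_sdiff_add_card, union_comm]

theorem arcEndsBelow_eq_map (m : ℕ) :
    arcEndsBelow w m = ({i | i < w i ∧ (w i : ℕ) < m} : Finset (Fin n)).map w.toEmbedding := by
  ext j
  simp only [arcEndsBelow, mem_filter, mem_univ, true_and, mem_map_equiv, Equiv.apply_symm_apply]
  exact and_comm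

theorem card_arcEndsBelow_le (m : ℕ) : #(arcEndsBelow w m) ≤ #(arcStartsBelow w m) := by
  rw [arcEndsBelow_eq_map, card_map]
  refine card_le_card fun i hi => ?_
  simp only [mem_filter, mem_univ, true_and, arcStartsBelow] at hi ⊢
  exact ⟨lt_trans hi.1 hi.2, hi.1⟩

theorem card_arcEndsBelow_of_le {m : ℕ} (hm : n ≤ m) :
    #(arcEndsBelow w m) = #(arcStartsBelow w m) := by
  rw [arcEndsBelow_eq_map, card_map]
  congr 1
  ext i
  simp only [mem_filter, mem_univ, true_and, arcStartsBelow]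
  omega

end Arcs

/-- For every permutation `w` of `{1,…,n}`, the word `φ(w)` is a Motzkin
path of length `n`: every prefix contains at least as many `U`'s as `D`'s,
and the whole word contains equally many `U`'s and `D`'s. -/
theorem phi_isMotzkin (n : ℕ) (w : Equiv.Perm (Fin n)) :
    IsMotzkin (phi w) := by
  refine ⟨fun m _ => ?_, ?_⟩
  · have balance := countIn_phi_U_add_card_arcEndsBelow w m
    have ends_le_starts := card_arcEndsBelow_le w m
    omega
  · have balance := countIn_phi_U_add_card_arcEndsBelow w n
    have ends_eq_starts := card_arcEndsBelow_of_le w le_rfl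
    omega
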